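/- Let G = (V,E) be a finite simple graph and a ∈ V. Then the projections of the graph state onto the computational-basis (Pauli-Z eigenbasis) states of qubit a satisfy P_{Z,+}^{(a)} |G⟩ = (1/√2) |Z,+⟩^{(a)} ⊗ |G−a⟩ and P_{Z,−}^{(a)} |G⟩ = (1/√2) |Z,−⟩^{(a)} ⊗ (⨂_{b∈N_a} Z^{(b)}) |G−a⟩, where |G−a⟩ is the graph state of the vertex-deleted graph G−a on the qubits V∖{a}. -/

import Mathlib

open scoped BigOperators

noncomputable section

/-- The state space of a collection of qubits indexed by `V`:
amplitudes on computational-basis configurations `V → Bool`. -/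
abbrev QState (V : Type*) := (V → Bool) → ℂ

variable {V : Type*}

/-- The inner product `⟨ψ|φ⟩`. -/
def qInner [Fintype V] [DecidableEq V] (ψ φ : QState V) : ℂ :=
  ∑ x, starRingEnd ℂ (ψ x) * φ x

/-- Pauli `X` acting on qubit `a`. -/
def pauliX [DecidableEq V] (a : V) (ψ : QState V) : QState V :=
  fun x => ψ (Function.update x a (!x a))

/-- Pauli `Z` acting on qubit `a`. -/
def pauliZ (a : V) (ψ : QState V) : QState V :=
  fun x => (if x a then (-1 : ℂ) else 1) * ψ x

/-- Pauli `Y` acting on qubit `a`. -/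
def pauliY [DecidableEq V] (a : V) (ψ : QState V) : QState V :=
  fun x => (if x a then Complex.I else -Complex.I) * ψ (Function.update x a (!x a))

/-- The tensor product `⨂_{b ∈ s} Z^{(b)}` of Pauli `Z` over the qubits in `s`. -/
def pauliZProd (s : Finset V) (ψ : QState V) : QState V :=
  fun x => (∏ b ∈ s, if x b then (-1 : ℂ) else 1) * ψ x

/-- A tensor product over the qubits in `s` of the diagonal single-qubit gate
`diag (f false, f true)`. -/
def diagProd (s : Finset V) (f : Bool → ℂ) (ψ : QState V) : QState V :=
  fun x => (∏ b ∈ s, f (x b)) * ψ x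

/-- The sign `(-1)^{x u · x v}` contributed by an edge `{u, v}`. -/
def edgeSign (x : V → Bool) : Sym2 V → ℂ :=
  Sym2.lift ⟨fun a b => if x a && x b then (-1 : ℂ) else 1,
    fun a b => by simp [Bool.and_comm]⟩

/-- The graph state `|G⟩ = (∏_{{u,v}∈E} CZ^{(uv)}) ⨂_v |+⟩^{(v)}` of a finite simple graph,
written out in amplitudes. -/
def graphState [Fintype V] [DecidableEq V] (G : SimpleGraph V) [DecidableRel G.Adj] :
    QState V :=
  fun x => ((Real.sqrt 2 : ℝ) : ℂ)⁻¹ ^ (Fintype.card V) * ∏ e ∈ G.edgeFinset, edgeSign x e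

/-- Local complementation `τ_a(G)` of a graph `G` at the vertex `a`: complement the
adjacency among the neighbors of `a`, leaving all other adjacencies unchanged. -/
def localComp (G : SimpleGraph V) (a : V) : SimpleGraph V where
  Adj u v :=
    (G.Adj a u ∧ G.Adj a v ∧ u ≠ v ∧ ¬ G.Adj u v) ∨
      ((¬ (G.Adj a u ∧ G.Adj a v)) ∧ G.Adj u v)
  symm := by
    constructor
    intro u v h
    rcases h with ⟨h1, h2, h3, h4⟩ | ⟨h1, h2⟩
    · exact Or.inl ⟨h2, h1, h3.symm, fun h => h4 h.symm⟩
    · exact Or.inr ⟨fun h => h1 ⟨h.2, h.1⟩, h2.symm⟩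
  loopless := by
    constructor
    intro u h
    rcases h with ⟨_, _, h3, _⟩ | ⟨_, h2⟩
    · exact h3 rfl
    · exact G.irrefl h2

instance [DecidableEq V] (G : SimpleGraph V) [DecidableRel G.Adj] (a : V) :
    DecidableRel (localComp G a).Adj := fun u v =>
  inferInstanceAs (Decidable
    ((G.Adj a u ∧ G.Adj a v ∧ u ≠ v ∧ ¬ G.Adj u v) ∨
      ((¬ (G.Adj a u ∧ G.Adj a v)) ∧ G.Adj u v)))

/-- The induced subgraph of `G` on the vertices satisfying `P`. -/
def inducedSub (G : SimpleGraph V) (P : V → Prop) : SimpleGraph {v : V // P v} :=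
  SimpleGraph.comap Subtype.val G

instance (G : SimpleGraph V) [DecidableRel G.Adj] (P : V → Prop) :
    DecidableRel (inducedSub G P).Adj := fun u v =>
  inferInstanceAs (Decidable (G.Adj u.1 v.1))

/-- The eigenvectors `|Z,+⟩ = |0⟩`, `|Z,-⟩ = |1⟩` of Pauli `Z`
(`s = false` the `+1`-eigenvector, `s = true` the `-1`-eigenvector). -/
def zVec (s : Bool) : Bool → ℂ := fun c => if c = s then 1 else 0

/-- The eigenvectors `|X,±⟩ = (|0⟩ ± |1⟩)/√2` of Pauli `X`
(`s = false` the `+1`-eigenvector, `s = true` the `-1`-eigenvector). -/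
def xVec (s : Bool) : Bool → ℂ :=
  fun c => ((Real.sqrt 2 : ℝ) : ℂ)⁻¹ * (if c && s then -1 else 1)

/-- The eigenvectors `|Y,±⟩ = (|0⟩ ± i|1⟩)/√2` of Pauli `Y`
(`s = false` the `+1`-eigenvector, `s = true` the `-1`-eigenvector). -/
def yVec (s : Bool) : Bool → ℂ :=
  fun c => ((Real.sqrt 2 : ℝ) : ℂ)⁻¹ *
    (if c then (if s then -Complex.I else Complex.I) else 1)

/-- The rank-one projector `|v⟩⟨v|` on qubit `a` (identity elsewhere),
for a single-qubit vector `v`. -/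
def projDir [DecidableEq V] (a : V) (v : Bool → ℂ) (ψ : QState V) : QState V :=
  fun x => v (x a) *
    (starRingEnd ℂ (v false) * ψ (Function.update x a false) +
      starRingEnd ℂ (v true) * ψ (Function.update x a true))

/-- The tensor product `|v⟩^{(a)} ⊗ |φ⟩` of a single-qubit state on qubit `a` with a state
on the remaining qubits. -/
def tensorQubit [DecidableEq V] (a : V) (v : Bool → ℂ) (φ : QState {u : V // u ≠ a}) :
    QState V :=
  fun x => v (x a) * φ (fun u => x u.1)

/-- Apply a single-qubit gate with matrix entries `m r c = ⟨r|M|c⟩` on qubit `a`. -/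
def applyGate [DecidableEq V] (a : V) (m : Bool → Bool → ℂ) (ψ : QState V) : QState V :=
  fun x => m (x a) false * ψ (Function.update x a false) +
    m (x a) true * ψ (Function.update x a true)

/-- The square roots `√(±iY) = (I ± iY)/√2`
(`s = false` for `√(+iY)`, `s = true` for `√(-iY)`). -/
def sqrtiY (s : Bool) : Bool → Bool → ℂ :=
  fun r c => ((Real.sqrt 2 : ℝ) : ℂ)⁻¹ *
    (if s then (if r = false ∧ c = true then -1 else 1)
     else (if r = true ∧ c = false then -1 else 1))

/-- The Hadamard gate. -/
def hadamard : Bool → Bool → ℂ :=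
  fun r c => ((Real.sqrt 2 : ℝ) : ℂ)⁻¹ * (if r && c then -1 else 1)

/-- Apply a tensor product of single-qubit gates, one on each qubit. -/
def applyLocal [Fintype V] [DecidableEq V] (u : V → Bool → Bool → ℂ) (ψ : QState V) :
    QState V :=
  fun x => ∑ y : V → Bool, (∏ v, u v (x v) (y v)) * ψ y

/-- `2×2` matrix multiplication (matrices as `Bool → Bool → ℂ`). -/
def matMul2 (a b : Bool → Bool → ℂ) : Bool → Bool → ℂ :=
  fun r c => ∑ k : Bool, a r k * b k c

/-- Adjoint of a `2×2` matrix. -/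
def matAdj2 (a : Bool → Bool → ℂ) : Bool → Bool → ℂ := fun r c => starRingEnd ℂ (a c r)

def idMat : Bool → Bool → ℂ := fun r c => if r = c then 1 else 0
def xMat : Bool → Bool → ℂ := fun r c => if r = c then 0 else 1
def yMat : Bool → Bool → ℂ := fun r c => if r = c then 0 else if r then Complex.I else -Complex.I
def zMat : Bool → Bool → ℂ := fun r c => if r = c then (if r then -1 else 1) else 0

/-- A `2×2` matrix is unitary. -/
def IsUnitary2 (u : Bool → Bool → ℂ) : Prop := matMul2 (matAdj2 u) u = idMat

/-- A single-qubit Clifford unitary: a unitary conjugating `X` and `Z` into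
`i^k·P` with `P` a Pauli matrix. -/
def IsClifford1 (u : Bool → Bool → ℂ) : Prop :=
  IsUnitary2 u ∧
    (∃ (k : ℕ) (P : Bool → Bool → ℂ), P ∈ ({idMat, xMat, yMat, zMat} : Set _) ∧
      matMul2 (matMul2 u xMat) (matAdj2 u) = Complex.I ^ k • P) ∧
    (∃ (k : ℕ) (P : Bool → Bool → ℂ), P ∈ ({idMat, xMat, yMat, zMat} : Set _) ∧
      matMul2 (matMul2 u zMat) (matAdj2 u) = Complex.I ^ k • P)

/-- The action of the `n`-qubit Pauli operator `c · ⨂_v X^{xv v} Z^{zv v}`. -/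
def pauliAction [Fintype V] (c : ℂ) (xv zv : V → Bool) (ψ : QState V) : QState V :=
  fun s => c * (∏ v, if zv v && (xor (s v) (xv v)) then (-1 : ℂ) else 1) *
    ψ (fun v => xor (s v) (xv v))

/-- The outer product `|ψ⟩⟨φ|` as a matrix on configurations. -/
def outer (ψ φ : QState V) : (V → Bool) → (V → Bool) → ℂ :=
  fun x y => ψ x * starRingEnd ℂ (φ y)

open Classical in
/-- Partial trace keeping the qubits that satisfy `P` (tracing out the others). -/
def ptraceKeep [Fintype V] [DecidableEq V] (P : V → Prop)
    (ρ : (V → Bool) → (V → Bool) → ℂ) :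
    ({v : V // P v} → Bool) → ({v : V // P v} → Bool) → ℂ :=
  fun x y => ∑ z : {v : V // ¬ P v} → Bool,
    ρ (fun w => if h : P w then x ⟨w, h⟩ else z ⟨w, h⟩)
      (fun w => if h : P w then y ⟨w, h⟩ else z ⟨w, h⟩)

open Classical in
/-- Apply a product of single-qubit bras `⟨bra v|` to each qubit `v` satisfying `P`,
leaving a state on the remaining qubits. -/
def applyBras [Fintype V] [DecidableEq V] (P : V → Prop) (bra : V → Bool → ℂ)
    (ψ : QState V) : QState {v : V // ¬ P v} :=
  fun x => ∑ z : {v : V // P v} → Bool,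
    (∏ v : {v : V // P v}, bra v.1 (z v)) *
      ψ (fun w => if h : P w then z ⟨w, h⟩ else x ⟨w, h⟩)

/-- A density operator: hermitian, trace one, positive semidefinite. -/
def IsDensityOp {α : Type*} [Fintype α] [DecidableEq α]
    (ρ : (α → Bool) → (α → Bool) → ℂ) : Prop :=
  (∀ x y, starRingEnd ℂ (ρ y x) = ρ x y) ∧ (∑ x, ρ x x = 1) ∧
    ∀ ψ : (α → Bool) → ℂ, ∃ r : ℝ, 0 ≤ r ∧
      (∑ x, ∑ y, starRingEnd ℂ (ψ x) * ρ x y * ψ y) = (r : ℂ)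

open Classical in
/-- Separability of an operator on the qubits indexed by `α` with respect to the
bipartition `(A, Aᶜ)`: a finite convex combination of tensor products of density
operators. -/
def SeparableWrt {α : Type*} [Fintype α] [DecidableEq α] (A : Set α)
    (ρ : (α → Bool) → (α → Bool) → ℂ) : Prop :=
  ∃ (k : ℕ) (p : Fin k → ℝ)
    (σ : Fin k → ({a : α // a ∈ A} → Bool) → ({a : α // a ∈ A} → Bool) → ℂ)
    (τ : Fin k → ({a : α // a ∉ A} → Bool) → ({a : α // a ∉ A} → Bool) → ℂ),
    (∀ i, 0 ≤ p i) ∧ (∑ i, p i = 1) ∧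
    (∀ i, IsDensityOp (σ i)) ∧ (∀ i, IsDensityOp (τ i)) ∧
    ∀ x y, ρ x y = ∑ i, (p i : ℂ) *
      (σ i (fun a => x a.1) (fun a => y a.1) * τ i (fun a => x a.1) (fun a => y a.1))


instance {α : Type*} [DecidableEq α] (r : α → α → Prop) [DecidableRel r] :
    DecidableRel (SimpleGraph.fromRel r).Adj := fun a b =>
  inferInstanceAs (Decidable (a ≠ b ∧ (r a b ∨ r b a)))

/-- The line graph on `{1, …, n}` (as `Fin n`) with edges between consecutive vertices. -/
def lineGraph (n : ℕ) : SimpleGraph (Fin n) :=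
  SimpleGraph.fromRel (fun i j => (i : ℕ) + 1 = (j : ℕ))

instance (n : ℕ) : DecidableRel (lineGraph n).Adj := fun a b =>
  inferInstanceAs (Decidable (a ≠ b ∧ ((a : ℕ) + 1 = (b : ℕ) ∨ (b : ℕ) + 1 = (a : ℕ))))

/-- The extension `I_R ⊗ s` of an operator `s` on `n` qubits by the identity on an extra
reference qubit labelled `0`. -/
def liftOp {n : ℕ} (s : QState (Fin n) → QState (Fin n)) (ψ : QState (Fin (n + 1))) :
    QState (Fin (n + 1)) :=
  fun x => s (fun y => ψ (Fin.cons (x 0) y)) (fun k => x k.succ)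

end

/-!
An edge `{a, b}` contributes the sign `(-1)^{x_a x_b}` to the amplitude of `|G⟩` at `x`, so
splitting the edges of `G` into those at `a` and those of `G − a` gives
`⟨x|G⟩ = (1/√2) (∏_{b ∈ N_a} (-1)^{x_a x_b}) ⟨x|_{V∖a} |G − a⟩`.
For `x_a = 0` the signs disappear; for `x_a = 1` they are the amplitudes of `⨂_{b∈N_a} Z^{(b)}`.
-/

namespace SimpleGraph

variable {V : Type*} [Fintype V] [DecidableEq V] (G : SimpleGraph V) [DecidableRel G.Adj] (a : V)

theorem incidenceFinset_eq_image_neighborFinset :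
    G.incidenceFinset a = (G.neighborFinset a).image (s(a, ·)) := by
  ext e
  induction e using Sym2.ind with
  | h u v =>
    simp only [mem_incidenceFinset, incidenceSet, Set.mem_ofPred_eq, mem_edgeSet, Sym2.mem_iff,
      Finset.mem_image, mem_neighborFinset, Sym2.eq_iff]
    aesop (add simp adj_comm)

theorem prod_incidenceFinset_eq_prod_neighborFinset {M : Type*} [CommMonoid M] (f : Sym2 V → M) :
    ∏ e ∈ G.incidenceFinset a, f e = ∏ b ∈ G.neighborFinset a, f s(a, b) := by
  rw [incidenceFinset_eq_image_neighborFinset, Finset.prod_image]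
  intro b _ c _ h
  exact Sym2.congr_right.mp h

theorem map_filter_adj_eq_neighborFinset :
    (Finset.univ.filter (fun b : {v : V // v ≠ a} => G.Adj a b.1)).map
      (Function.Embedding.subtype _) = G.neighborFinset a := by
  ext b
  simpa using fun h => (G.ne_of_adj h).symm

theorem map_edgeFinset_inducedSub_ne :
    (inducedSub G (· ≠ a)).edgeFinset.map (Function.Embedding.subtype _).sym2Map =
      G.edgeFinset.filter (a ∉ ·) := by
  ext e
  induction e using Sym2.ind with
  | h u v =>
    simp only [Finset.mem_map, Finset.mem_filter, mem_edgeFinset, Sym2.exists, mem_edgeSet,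
      Function.Embedding.sym2Map_apply, Function.Embedding.subtype_apply, Sym2.map_mk,
      Sym2.eq_iff, Sym2.mem_iff, Subtype.exists]
    simp only [inducedSub, comap_adj]
    aesop (add simp adj_comm)

theorem prod_edgeFinset_inducedSub_ne {M : Type*} [CommMonoid M] (f : Sym2 V → M) :
    ∏ e ∈ (inducedSub G (· ≠ a)).edgeFinset, f (e.map Subtype.val) =
      ∏ e ∈ G.edgeFinset.filter (a ∉ ·), f e := by
  rw [← map_edgeFinset_inducedSub_ne, Finset.prod_map]
  rfl

theorem prod_edgeFinset_eq_prod_neighborFinset_mul {M : Type*} [CommMonoid M]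
    (f : Sym2 V → M) :
    ∏ e ∈ G.edgeFinset, f e =
      (∏ b ∈ G.neighborFinset a, f s(a, b)) *
        ∏ e ∈ (inducedSub G (· ≠ a)).edgeFinset, f (e.map Subtype.val) := by
  rw [← Finset.prod_filter_mul_prod_filter_not G.edgeFinset (a ∈ ·), ← incidenceFinset_eq_filter,
    prod_incidenceFinset_eq_prod_neighborFinset, prod_edgeFinset_inducedSub_ne]

end SimpleGraph

theorem Fintype.card_subtype_ne_add_one {V : Type*} [Fintype V] [DecidableEq V] (a : V) :
    Fintype.card {v : V // v ≠ a} + 1 = Fintype.card V := by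
  rw [Fintype.card_subtype_compl, Fintype.card_subtype_eq]
  have := Fintype.card_pos_iff.mpr ⟨a⟩
  omega

section States

variable {V : Type*}

theorem edgeSign_mk (x : V → Bool) (u v : V) :
    edgeSign x s(u, v) = if x u && x v then -1 else 1 := rfl

theorem edgeSign_map_val (a : V) (x : V → Bool) (e : Sym2 {v : V // v ≠ a}) :
    edgeSign x (e.map Subtype.val) = edgeSign (fun u => x u.1) e := by
  induction e using Sym2.ind
  rfl

variable [DecidableEq V] (a : V)

theorem projDir_zVec_apply (s : Bool) (ψ : QState V) (x : V → Bool) :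
    projDir a (zVec s) ψ x = if x a = s then ψ x else 0 := by
  have hcoeff : starRingEnd ℂ (zVec s false) * ψ (Function.update x a false) +
      starRingEnd ℂ (zVec s true) * ψ (Function.update x a true) = ψ (Function.update x a s) := by
    cases s <;> simp [zVec]
  rw [projDir, hcoeff]
  by_cases hx : x a = s
  · rw [if_pos hx, zVec, if_pos hx, one_mul, ← hx, Function.update_eq_self]
  · rw [if_neg hx, zVec, if_neg hx, zero_mul]

theorem tensorQubit_zVec_apply (s : Bool) (φ : QState {u : V // u ≠ a}) (x : V → Bool) :
    tensorQubit a (zVec s) φ x = if x a = s then φ (fun u => x u.1) else 0 := by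
  simp [tensorQubit, zVec]

end States

section GraphState

variable {V : Type*} [Fintype V] [DecidableEq V] (G : SimpleGraph V) [DecidableRel G.Adj] (a : V)

theorem graphState_apply_eq (x : V → Bool) :
    graphState G x = ((Real.sqrt 2 : ℝ) : ℂ)⁻¹ *
      ((∏ b ∈ G.neighborFinset a, if x a && x b then (-1 : ℂ) else 1) *
        graphState (inducedSub G (· ≠ a)) (fun u => x u.1)) := by
  simp only [graphState, SimpleGraph.prod_edgeFinset_eq_prod_neighborFinset_mul G a (edgeSign x),
    edgeSign_map_val, edgeSign_mk, ← Fintype.card_subtype_ne_add_one a, pow_succ]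
  ring

theorem graphState_apply_of_eq_false {x : V → Bool} (hx : x a = false) :
    graphState G x =
      ((Real.sqrt 2 : ℝ) : ℂ)⁻¹ * graphState (inducedSub G (· ≠ a)) (fun u => x u.1) := by
  simp [graphState_apply_eq G a, hx]

theorem graphState_apply_of_eq_true {x : V → Bool} (hx : x a = true) :
    graphState G x = ((Real.sqrt 2 : ℝ) : ℂ)⁻¹ *
      pauliZProd (Finset.univ.filter (fun b : {v : V // v ≠ a} => G.Adj a b.1))
        (graphState (inducedSub G (· ≠ a))) (fun u => x u.1) := by
  rw [graphState_apply_eq G a, pauliZProd, ← SimpleGraph.map_filter_adj_eq_neighborFinset,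
    Finset.prod_map]
  simp [hx]

end GraphState

/-- Projecting qubit `a` of a graph state onto the Pauli-`Z` eigenbasis:
`P_{Z,+}^{(a)} |G⟩ = (1/√2) |Z,+⟩^{(a)} ⊗ |G−a⟩` and
`P_{Z,−}^{(a)} |G⟩ = (1/√2) |Z,−⟩^{(a)} ⊗ (⨂_{b∈N_a} Z^{(b)}) |G−a⟩`. -/
theorem stmt2 {V : Type*} [Fintype V] [DecidableEq V]
    (G : SimpleGraph V) [DecidableRel G.Adj] (a : V) :
    projDir a (zVec false) (graphState G) =
      ((Real.sqrt 2 : ℝ) : ℂ)⁻¹ •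
        tensorQubit a (zVec false) (graphState (inducedSub G (· ≠ a))) ∧
    projDir a (zVec true) (graphState G) =
      ((Real.sqrt 2 : ℝ) : ℂ)⁻¹ •
        tensorQubit a (zVec true)
          (pauliZProd (Finset.univ.filter (fun b : {v : V // v ≠ a} => G.Adj a b.1))
            (graphState (inducedSub G (· ≠ a)))) := by
  refine ⟨funext fun x => ?_, funext fun x => ?_⟩ <;>
    rw [Pi.smul_apply, smul_eq_mul, projDir_zVec_apply, tensorQubit_zVec_apply] <;>
    split_ifs with hx
  exacts [graphState_apply_of_eq_false G a hx, (mul_zero _).symm,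
    graphState_apply_of_eq_true G a hx, (mul_zero _).symm]
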